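/- arXiv:1911.00267 — 6 statements merged into one kernel-verified Lean document; each statement's English description precedes it below -/
import Mathlib

section
/- In the binary reflected Gray code, if two consecutive codewords rg_B(x) and rg_B(x+1) differ at position m < B, then bits m+1 through B of both codewords equal the string 1 0^{B-m-1}. -/
/-- The `B`-bit binary reflected Gray code (bit `0` most significant). -/
def rg : (B : ℕ) → ℕ → (Fin B → Bool)
  | 0, _ => fun i => i.elim0
  | B + 1, x =>
      Fin.cons (decide (2 ^ B ≤ x)) (rg B (if x < 2 ^ B then x else 2 ^ (B + 1) - 1 - x))

/-!
Peel off the most significant bit. If consecutive codewords differ below the top bit, then `x`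
and `x + 1` lie in the same half of the code, so their tails are again consecutive codewords of
the `(B-1)`-bit code (in reversed order in the upper half) and induction applies. If they differ
at the top bit, then `x + 1 = 2^(B-1)` is the reflection point, and both tails are the last
`(B-1)`-bit codeword `1 0 ⋯ 0`.
-/

lemma rg_succ_of_lt {B x : ℕ} (h : x < 2 ^ B) : rg (B + 1) x = Fin.cons false (rg B x) := by
  simp [rg, h]

lemma rg_succ_of_le {B x : ℕ} (h : 2 ^ B ≤ x) :
    rg (B + 1) x = Fin.cons true (rg B (2 ^ (B + 1) - 1 - x)) := by
  simp [rg, h, Nat.not_lt.mpr h]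

lemma rg_zero_right (B : ℕ) : rg B 0 = fun _ => false := by
  induction B with
  | zero => funext i; exact i.elim0
  | succ B ih =>
    rw [rg_succ_of_lt (Nat.two_pow_pos B), ih]
    funext i
    cases i using Fin.cases <;> rfl

lemma rg_two_pow_sub_one (B : ℕ) : rg B (2 ^ B - 1) = fun i => decide (i.val = 0) := by
  cases B with
  | zero => funext i; exact i.elim0
  | succ B =>
    have hB : 2 ^ (B + 1) = 2 * 2 ^ B := pow_succ' 2 B
    rw [rg_succ_of_le (by omega), Nat.sub_self, rg_zero_right]
    funext i
    cases i using Fin.cases <;> simp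

def SuffixAfter {B : ℕ} (m : Fin B) (c : Fin B → Bool) : Prop :=
  ∀ j, m < j → c j = decide (j.val = m.val + 1)

lemma SuffixAfter.cons {B : ℕ} {m : Fin B} {c : Fin B → Bool} (h : SuffixAfter m c) (a : Bool) :
    SuffixAfter m.succ (Fin.cons a c) := by
  intro j hj
  cases j using Fin.cases with
  | zero => exact absurd hj (Fin.not_lt_zero _)
  | succ k => simpa using h k (Fin.succ_lt_succ_iff.mp hj)

lemma suffixAfter_zero_cons {B : ℕ} {c : Fin B → Bool} (hc : c = fun i => decide (i.val = 0))
    (a : Bool) : SuffixAfter 0 (Fin.cons a c : Fin (B + 1) → Bool) := by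
  intro j hj
  cases j using Fin.cases with
  | zero => exact absurd hj (lt_irrefl _)
  | succ k => simp [hc]

theorem rg_suffixAfter_of_ne {B x : ℕ} (hx : x + 1 < 2 ^ B) {m : Fin B}
    (hdiff : rg B x m ≠ rg B (x + 1) m) :
    SuffixAfter m (rg B x) ∧ SuffixAfter m (rg B (x + 1)) := by
  induction B generalizing x with
  | zero => exact m.elim0
  | succ B ih =>
    have hB : 2 ^ (B + 1) = 2 * 2 ^ B := pow_succ' 2 B
    rcases Nat.lt_trichotomy (x + 1) (2 ^ B) with hlt | heq | hgt
    · rw [rg_succ_of_lt (by omega), rg_succ_of_lt hlt] at hdiff ⊢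
      cases m using Fin.cases with
      | zero => exact absurd rfl hdiff
      | succ i =>
        obtain ⟨h₀, h₁⟩ := ih hlt (by simpa using hdiff)
        exact ⟨h₀.cons _, h₁.cons _⟩
    · have hmirror : 2 ^ (B + 1) - 1 - (x + 1) = x := by omega
      rw [rg_succ_of_lt (by omega), rg_succ_of_le heq.ge, hmirror] at hdiff ⊢
      cases m using Fin.cases with
      | zero =>
        have hlast : rg B x = fun i => decide (i.val = 0) := by
          rw [show x = 2 ^ B - 1 by omega, rg_two_pow_sub_one]
        exact ⟨suffixAfter_zero_cons hlast _, suffixAfter_zero_cons hlast _⟩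
      | succ i => exact absurd (by simp) hdiff
    · obtain ⟨y, hy⟩ : ∃ y, y + 1 = 2 ^ (B + 1) - 1 - x := ⟨2 ^ (B + 1) - 2 - x, by omega⟩
      have hy' : 2 ^ (B + 1) - 1 - (x + 1) = y := by omega
      rw [rg_succ_of_le (by omega), rg_succ_of_le hgt.le, ← hy, hy'] at hdiff ⊢
      cases m using Fin.cases with
      | zero => exact absurd rfl hdiff
      | succ i =>
        obtain ⟨h₀, h₁⟩ := ih (x := y) (by omega) (by simpa using hdiff.symm)
        exact ⟨h₁.cons _, h₀.cons _⟩

theorem rg_suffix_after_diff_general (B : ℕ) (x : ℕ) (hx : x + 1 < 2 ^ B) (m : Fin B)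
    (hdiff : rg B x m ≠ rg B (x + 1) m) :
    ∀ j : Fin B, m < j →
      rg B x j = decide (j.val = m.val + 1) ∧
      rg B (x + 1) j = decide (j.val = m.val + 1) := by
  obtain ⟨h₀, h₁⟩ := rg_suffixAfter_of_ne hx hdiff
  exact fun j hj => ⟨h₀ j hj, h₁ j hj⟩

/-- If the consecutive Gray codewords `rg_B(x)` and `rg_B(x+1)` differ at a position `m`
that is not the last position, then on every later position `j > m` both codewords
agree with the string `1 0^{B-m-1}`: the bit right after `m` is `1` and all remaining
bits are `0`. -/
theorem rg_suffix_after_diff (B : ℕ) (x : ℕ) (hx : x + 1 < 2 ^ B) (m : Fin B)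
    (hm : m.val + 1 < B) (hdiff : rg B x m ≠ rg B (x + 1) m) :
    ∀ j : Fin B, m < j →
      rg B x j = decide (j.val = m.val + 1) ∧
      rg B (x + 1) j = decide (j.val = m.val + 1) :=
  rg_suffix_after_diff_general B x hx m hdiff
end

section
/- For Gray code strings g, h ∈ {0,1}^B and i ∈ [0,B]: the finite state machine with states {00,01,10,11}, start state 00, and transition s^{(i)} = s^{(i-1)} ⋄ g_i h_i (where ⋄ is defined by the transition table: from 00, input ab leads to state ab; 01 and 10 are absorbing; from 11, inputs 00,01,11,10 lead to 11,10,00,01 respectively) satisfies: s^{(i)} = 00 iff g_{1,i} = h_{1,i} with even parity; s^{(i)} = 11 iff g_{1,i} = h_{1,i} with odd parity; s^{(i)} = 01 iff the Gray-code value of g is less than that of h with the values distinguished within the first i bits; s^{(i)} = 10 iff the value of g exceeds that of h, distinguished within the first i bits. Moreover s^{(i)} = 00 implies g < h iff g_{i+1,B} < h_{i+1,B} (as Gray codes), and s^{(i)} = 11 implies g < h iff g_{i+1,B} > h_{i+1,B}. -/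
/-- Decoding of a `B`-bit binary reflected Gray code string (bit `0` most significant). -/
def grayVal : (B : ℕ) → (Fin B → Bool) → ℕ
  | 0, _ => 0
  | B + 1, g =>
      if g 0 then 2 ^ (B + 1) - 1 - grayVal B (fun i => g i.succ)
      else grayVal B (fun i => g i.succ)

/-- The transition operator `⋄` of the Gray-code comparison FSM:
`00 ⋄ x = x`; `01` and `10` are absorbing; from `11`, inputs `00, 01, 11, 10`
lead to `11, 10, 00, 01` respectively. -/
def diamond : Bool × Bool → Bool × Bool → Bool × Bool
  | (false, false), x => x
  | (false, true), _ => (false, true)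
  | (true, false), _ => (true, false)
  | (true, true), (a, b) => (!a, !b)

/-- The state `s^{(i)}(g,h)` of the FSM after processing `g_1 h_1, …, g_i h_i`,
starting from state `00`. -/
def fsmState (B : ℕ) (g h : Fin B → Bool) (i : ℕ) : Bool × Bool :=
  (List.range i).foldl
    (fun s j => if hj : j < B then diamond s (g ⟨j, hj⟩, h ⟨j, hj⟩) else s)
    (false, false)

/-- The suffix `g_{i+1,B}` of a `B`-bit string, as a `(B-i)`-bit string. -/
def suffixStr (B i : ℕ) (hi : i ≤ B) (g : Fin B → Bool) : Fin (B - i) → Bool :=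
  fun j => g ⟨i + j.1, by omega⟩

lemma grayVal_lt_pow (B : ℕ) (g : Fin B → Bool) : grayVal B g < 2 ^ B := by
  induction B with
  | zero => simp [grayVal]
  | succ B ih =>
    simp only [grayVal]
    have := ih (fun i => g i.succ)
    split <;> [skip; skip] <;>
    · have h2 : (2:ℕ)^(B+1) = 2^B * 2 := pow_succ 2 B
      omega

lemma grayVal_pos_eq (n : ℕ) (hn : 0 < n) (x : Fin n → Bool) :
    grayVal n x = if x ⟨0, hn⟩ = true then
      2 ^ n - 1 - grayVal (n-1) (fun j : Fin (n-1) => x ⟨j.1+1, by omega⟩)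
    else grayVal (n-1) (fun j : Fin (n-1) => x ⟨j.1+1, by omega⟩) := by
  cases n with
  | zero => omega
  | succ n =>
    show grayVal (n+1) x = _
    simp only [grayVal]
    have h0 : (0 : Fin (n+1)) = ⟨0, hn⟩ := rfl
    rfl

lemma gray_firstbit (n : ℕ) (hn : 0 < n) (x y : Fin n → Bool)
    (hx : x ⟨0, hn⟩ = false) (hy : y ⟨0, hn⟩ = true) : grayVal n x < grayVal n y := by
  rw [grayVal_pos_eq n hn x, grayVal_pos_eq n hn y, hx, hy]
  simp only [if_pos, if_neg, Bool.false_eq_true, ite_false, ite_true]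
  have b1 := grayVal_lt_pow (n-1) (fun j : Fin (n-1) => x ⟨j.1+1, by omega⟩)
  have b2 := grayVal_lt_pow (n-1) (fun j : Fin (n-1) => y ⟨j.1+1, by omega⟩)
  have h2 : (2:ℕ)^n = 2^(n-1) * 2 := by
    rw [← pow_succ]; congr 1; omega
  omega

lemma suffix_zero (B : ℕ) (g : Fin B → Bool) : suffixStr B 0 (Nat.zero_le B) g = g := by
  funext j
  exact congrArg g (Fin.ext (Nat.zero_add _))

lemma tail_suffix (B i : ℕ) (hi : i < B) (g : Fin B → Bool) :
    (fun j : Fin (B - i - 1) => suffixStr B i (le_of_lt hi) g ⟨j.1+1, by omega⟩)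
      = suffixStr B (i+1) hi g := by
  funext j
  exact congrArg g (Fin.ext (by simp [suffixStr]; omega))

lemma card_step (B i : ℕ) (hi : i < B) (g : Fin B → Bool) :
    (Finset.univ.filter fun j : Fin B => j.1 < i+1 ∧ g j = true).card
    = (Finset.univ.filter fun j : Fin B => j.1 < i ∧ g j = true).card
      + (if g ⟨i, hi⟩ then 1 else 0) := by
  classical
  have hset : (Finset.univ.filter fun j : Fin B => j.1 < i+1 ∧ g j = true)
      = (Finset.univ.filter fun j : Fin B => j.1 < i ∧ g j = true)
        ∪ (Finset.univ.filter fun j : Fin B => j = ⟨i, hi⟩ ∧ g j = true) := by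
    ext j
    simp only [Finset.mem_filter, Finset.mem_union, Finset.mem_univ, true_and]
    constructor
    · rintro ⟨h1, h2⟩
      rcases Nat.lt_or_ge j.1 i with h | h
      · exact Or.inl ⟨h, h2⟩
      · exact Or.inr ⟨Fin.ext (show j.1 = i by omega), h2⟩
    · rintro (⟨h1, h2⟩ | ⟨h1, h2⟩)
      · exact ⟨by omega, h2⟩
      · have hv := congrArg Fin.val h1; dsimp at hv; exact ⟨by omega, h2⟩
  rw [hset, Finset.card_union_of_disjoint]
  · congr 1
    by_cases hg : g ⟨i, hi⟩ = true
    · rw [if_pos hg]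
      have he : (Finset.univ.filter fun j : Fin B => j = ⟨i, hi⟩ ∧ g j = true) = {⟨i, hi⟩} := by
        ext j; simp (config := {contextual := true}) [hg]
      rw [he, Finset.card_singleton]
    · rw [if_neg (by simpa using hg)]
      have he : (Finset.univ.filter fun j : Fin B => j = ⟨i, hi⟩ ∧ g j = true) = ∅ := by
        ext j; simp (config := {contextual := true}) [hg]
      rw [he, Finset.card_empty]
  · rw [Finset.disjoint_filter]
    rintro j _ ⟨h1, _⟩ ⟨h2, _⟩
    have hv := congrArg Fin.val h2; dsimp at hv; omega

lemma gray_decomp (B : ℕ) (g h : Fin B → Bool) :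
    ∀ i, ∀ hi : i ≤ B, (∀ j : Fin B, j.1 < i → g j = h j) →
    (((Finset.univ.filter fun j : Fin B => j.1 < i ∧ g j = true).card % 2 = 0 →
        grayVal B g + grayVal (B-i) (suffixStr B i hi h)
          = grayVal B h + grayVal (B-i) (suffixStr B i hi g)) ∧
     ((Finset.univ.filter fun j : Fin B => j.1 < i ∧ g j = true).card % 2 = 1 →
        grayVal B g + grayVal (B-i) (suffixStr B i hi g)
          = grayVal B h + grayVal (B-i) (suffixStr B i hi h))) := by
  intro i
  induction i with
  | zero =>
    intro hi _
    constructor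
    · intro _
      rw [show suffixStr B 0 hi h = h from suffix_zero B h,
          show suffixStr B 0 hi g = g from suffix_zero B g]
      exact Nat.add_comm _ _
    · intro hp
      exfalso
      have he : (Finset.univ.filter fun j : Fin B => j.1 < 0 ∧ g j = true) = ∅ := by
        ext j; simp
      rw [he] at hp; simp at hp
  | succ i ihf =>
    intro hi hEq
    have hiB : i < B := hi
    obtain ⟨IH0, IH1⟩ := ihf (le_of_lt hiB) (fun j hj => hEq j (by omega))
    have hgb : g ⟨i, hiB⟩ = h ⟨i, hiB⟩ := hEq ⟨i, hiB⟩ (Nat.lt_succ_self i)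
    have h0 : 0 < B - i := by omega
    have hug := grayVal_pos_eq (B - i) h0 (suffixStr B i (le_of_lt hiB) g)
    have huh := grayVal_pos_eq (B - i) h0 (suffixStr B i (le_of_lt hiB) h)
    rw [show suffixStr B i (le_of_lt hiB) g ⟨0, h0⟩ = g ⟨i, hiB⟩ from rfl] at hug
    rw [show suffixStr B i (le_of_lt hiB) h ⟨0, h0⟩ = h ⟨i, hiB⟩ from rfl] at huh
    have etg : grayVal (B - i - 1)
        (fun j : Fin (B - i - 1) => suffixStr B i (le_of_lt hiB) g ⟨j.1+1, by omega⟩)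
        = grayVal (B - (i+1)) (suffixStr B (i+1) hi g) :=
      congrArg _ (tail_suffix B i hiB g)
    have eth : grayVal (B - i - 1)
        (fun j : Fin (B - i - 1) => suffixStr B i (le_of_lt hiB) h ⟨j.1+1, by omega⟩)
        = grayVal (B - (i+1)) (suffixStr B (i+1) hi h) :=
      congrArg _ (tail_suffix B i hiB h)
    rw [etg] at hug
    rw [eth] at huh
    have bg := grayVal_lt_pow (B - (i+1)) (suffixStr B (i+1) hi g)
    have bh := grayVal_lt_pow (B - (i+1)) (suffixStr B (i+1) hi h)
    have hpow : (2:ℕ)^(B-i) = 2^(B-(i+1)) * 2 := by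
      rw [← pow_succ]; congr 1; omega
    have cs := card_step B i hiB g
    constructor
    · intro hp
      by_cases hb : g ⟨i, hiB⟩ = true
      · rw [if_pos hb] at hug
        rw [if_pos (hgb ▸ hb)] at huh
        have hodd : (Finset.univ.filter fun j : Fin B => j.1 < i ∧ g j = true).card % 2 = 1 := by
          rw [cs, if_pos hb] at hp; omega
        have e := IH1 hodd
        rw [hug, huh] at e
        omega
      · rw [if_neg hb] at hug
        rw [if_neg (hgb ▸ hb)] at huh
        have hev : (Finset.univ.filter fun j : Fin B => j.1 < i ∧ g j = true).card % 2 = 0 := by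
          rw [cs, if_neg hb] at hp; omega
        have e := IH0 hev
        rw [hug, huh] at e
        omega
    · intro hp
      by_cases hb : g ⟨i, hiB⟩ = true
      · rw [if_pos hb] at hug
        rw [if_pos (hgb ▸ hb)] at huh
        have hev : (Finset.univ.filter fun j : Fin B => j.1 < i ∧ g j = true).card % 2 = 0 := by
          rw [cs, if_pos hb] at hp; omega
        have e := IH0 hev
        rw [hug, huh] at e
        omega
      · rw [if_neg hb] at hug
        rw [if_neg (hgb ▸ hb)] at huh
        have hodd : (Finset.univ.filter fun j : Fin B => j.1 < i ∧ g j = true).card % 2 = 1 := by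
          rw [cs, if_neg hb] at hp; omega
        have e := IH1 hodd
        rw [hug, huh] at e
        omega

lemma fsm_succ (B : ℕ) (g h : Fin B → Bool) (i : ℕ) (hi : i < B) :
    fsmState B g h (i+1) = diamond (fsmState B g h i) (g ⟨i, hi⟩, h ⟨i, hi⟩) := by
  unfold fsmState
  rw [List.range_succ, List.foldl_append]
  simp [hi]

lemma aux4 (B : ℕ) (g h : Fin B → Bool) : ∀ i, i ≤ B →
    (fsmState B g h i = (false, false) ↔
      (∀ j : Fin B, j.1 < i → g j = h j) ∧
        (Finset.univ.filter fun j : Fin B => j.1 < i ∧ g j = true).card % 2 = 0) ∧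
    (fsmState B g h i = (true, true) ↔
      (∀ j : Fin B, j.1 < i → g j = h j) ∧
        (Finset.univ.filter fun j : Fin B => j.1 < i ∧ g j = true).card % 2 = 1) ∧
    (fsmState B g h i = (false, true) ↔
      (∃ j : Fin B, j.1 < i ∧ g j ≠ h j) ∧ grayVal B g < grayVal B h) ∧
    (fsmState B g h i = (true, false) ↔
      (∃ j : Fin B, j.1 < i ∧ g j ≠ h j) ∧ grayVal B h < grayVal B g) := by
  intro i
  induction i with
  | zero =>
    intro _
    refine ⟨iff_of_true rfl ⟨fun j hj => absurd hj (by omega), ?_⟩,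
      iff_of_false (by simp [fsmState]) ?_,
      iff_of_false (by simp [fsmState]) ?_,
      iff_of_false (by simp [fsmState]) ?_⟩
    · have he : (Finset.univ.filter fun j : Fin B => j.1 < 0 ∧ g j = true) = ∅ := by
        ext j; simp
      rw [he]; simp
    · rintro ⟨_, hp⟩
      have he : (Finset.univ.filter fun j : Fin B => j.1 < 0 ∧ g j = true) = ∅ := by
        ext j; simp
      rw [he] at hp; simp at hp
    · rintro ⟨⟨j, hj, _⟩, _⟩; omega
    · rintro ⟨⟨j, hj, _⟩, _⟩; omega
  | succ i ih =>
    intro hi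
    have hiB : i < B := hi
    obtain ⟨I1, I2, I3, I4⟩ := ih (le_of_lt hiB)
    obtain ⟨a, b, hs⟩ : ∃ a b, fsmState B g h i = (a, b) := ⟨_, _, rfl⟩
    rw [hs] at I1 I2 I3 I4
    rw [fsm_succ B g h i hiB, hs]
    have hcs := card_step B i hiB g
    have h0 : 0 < B - i := by omega
    cases a <;> cases b
    · -- state 00
      obtain ⟨heq, hpar⟩ := I1.mp rfl
      have e := (gray_decomp B g h i (le_of_lt hiB) heq).1 hpar
      cases hga : g ⟨i, hiB⟩ <;> cases hhb : h ⟨i, hiB⟩ <;> simp only [diamond]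
      · -- bits ff : new 00
        have heqS : ∀ j : Fin B, j.1 < i+1 → g j = h j := by
          intro j hj
          rcases Nat.lt_or_ge j.1 i with hji | hji
          · exact heq j hji
          · have hj' : j = ⟨i, hiB⟩ := Fin.ext (show j.1 = i by omega)
            rw [hj', hga, hhb]
        refine ⟨iff_of_true (by simp) ⟨heqS, by rw [hcs, if_neg (by simp [hga])]; omega⟩,
          iff_of_false (by simp) ?_, iff_of_false (by simp) ?_, iff_of_false (by simp) ?_⟩
        · rintro ⟨_, hp⟩; rw [hcs, if_neg (by simp [hga])] at hp; omega
        · rintro ⟨⟨j, hj, hne⟩, _⟩; exact hne (heqS j hj)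
        · rintro ⟨⟨j, hj, hne⟩, _⟩; exact hne (heqS j hj)
      · -- bits ft : new 01, g < h
        have hlt := gray_firstbit (B - i) h0 (suffixStr B i (le_of_lt hiB) g)
          (suffixStr B i (le_of_lt hiB) h) hga hhb
        have hgh : grayVal B g < grayVal B h := by omega
        have hne : g ⟨i, hiB⟩ ≠ h ⟨i, hiB⟩ := by rw [hga, hhb]; simp
        refine ⟨iff_of_false (by simp) ?_, iff_of_false (by simp) ?_,
          iff_of_true (by simp) ⟨⟨⟨i, hiB⟩, Nat.lt_succ_self i, hne⟩, hgh⟩,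
          iff_of_false (by simp) ?_⟩
        · rintro ⟨hall, _⟩; exact hne (hall ⟨i, hiB⟩ (Nat.lt_succ_self i))
        · rintro ⟨hall, _⟩; exact hne (hall ⟨i, hiB⟩ (Nat.lt_succ_self i))
        · rintro ⟨_, hlt'⟩; omega
      · -- bits tf : new 10, h < g
        have hlt := gray_firstbit (B - i) h0 (suffixStr B i (le_of_lt hiB) h)
          (suffixStr B i (le_of_lt hiB) g) hhb hga
        have hhg : grayVal B h < grayVal B g := by omega
        have hne : g ⟨i, hiB⟩ ≠ h ⟨i, hiB⟩ := by rw [hga, hhb]; simp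
        refine ⟨iff_of_false (by simp) ?_, iff_of_false (by simp) ?_,
          iff_of_false (by simp) ?_,
          iff_of_true (by simp) ⟨⟨⟨i, hiB⟩, Nat.lt_succ_self i, hne⟩, hhg⟩⟩
        · rintro ⟨hall, _⟩; exact hne (hall ⟨i, hiB⟩ (Nat.lt_succ_self i))
        · rintro ⟨hall, _⟩; exact hne (hall ⟨i, hiB⟩ (Nat.lt_succ_self i))
        · rintro ⟨_, hlt'⟩; omega
      · -- bits tt : new 11
        have heqS : ∀ j : Fin B, j.1 < i+1 → g j = h j := by
          intro j hj
          rcases Nat.lt_or_ge j.1 i with hji | hji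
          · exact heq j hji
          · have hj' : j = ⟨i, hiB⟩ := Fin.ext (show j.1 = i by omega)
            rw [hj', hga, hhb]
        refine ⟨iff_of_false (by simp) ?_,
          iff_of_true (by simp) ⟨heqS, by rw [hcs, if_pos (by simp [hga])]; omega⟩,
          iff_of_false (by simp) ?_, iff_of_false (by simp) ?_⟩
        · rintro ⟨_, hp⟩; rw [hcs, if_pos (by simp [hga])] at hp; omega
        · rintro ⟨⟨j, hj, hne⟩, _⟩; exact hne (heqS j hj)
        · rintro ⟨⟨j, hj, hne⟩, _⟩; exact hne (heqS j hj)
    · -- state 01 : absorbing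
      obtain ⟨⟨j, hj, hne⟩, hlt⟩ := I3.mp rfl
      simp only [diamond]
      refine ⟨iff_of_false (by simp) ?_, iff_of_false (by simp) ?_,
        iff_of_true (by simp) ⟨⟨j, Nat.lt_succ_of_lt hj, hne⟩, hlt⟩, iff_of_false (by simp) ?_⟩
      · rintro ⟨hall, _⟩; exact hne (hall j (Nat.lt_succ_of_lt hj))
      · rintro ⟨hall, _⟩; exact hne (hall j (Nat.lt_succ_of_lt hj))
      · rintro ⟨_, hlt'⟩; omega
    · -- state 10 : absorbing
      obtain ⟨⟨j, hj, hne⟩, hlt⟩ := I4.mp rfl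
      simp only [diamond]
      refine ⟨iff_of_false (by simp) ?_, iff_of_false (by simp) ?_,
        iff_of_false (by simp) ?_, iff_of_true (by simp) ⟨⟨j, Nat.lt_succ_of_lt hj, hne⟩, hlt⟩⟩
      · rintro ⟨hall, _⟩; exact hne (hall j (Nat.lt_succ_of_lt hj))
      · rintro ⟨hall, _⟩; exact hne (hall j (Nat.lt_succ_of_lt hj))
      · rintro ⟨_, hlt'⟩; omega
    · -- state 11
      obtain ⟨heq, hpar⟩ := I2.mp rfl
      have e := (gray_decomp B g h i (le_of_lt hiB) heq).2 hpar
      cases hga : g ⟨i, hiB⟩ <;> cases hhb : h ⟨i, hiB⟩ <;> simp only [diamond]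
      · -- bits ff : new 11
        have heqS : ∀ j : Fin B, j.1 < i+1 → g j = h j := by
          intro j hj
          rcases Nat.lt_or_ge j.1 i with hji | hji
          · exact heq j hji
          · have hj' : j = ⟨i, hiB⟩ := Fin.ext (show j.1 = i by omega)
            rw [hj', hga, hhb]
        refine ⟨iff_of_false (by simp) ?_,
          iff_of_true (by simp) ⟨heqS, by rw [hcs, if_neg (by simp [hga])]; omega⟩,
          iff_of_false (by simp) ?_, iff_of_false (by simp) ?_⟩
        · rintro ⟨_, hp⟩; rw [hcs, if_neg (by simp [hga])] at hp; omega
        · rintro ⟨⟨j, hj, hne⟩, _⟩; exact hne (heqS j hj)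
        · rintro ⟨⟨j, hj, hne⟩, _⟩; exact hne (heqS j hj)
      · -- bits ft : new 10, h < g
        have hlt := gray_firstbit (B - i) h0 (suffixStr B i (le_of_lt hiB) g)
          (suffixStr B i (le_of_lt hiB) h) hga hhb
        have hhg : grayVal B h < grayVal B g := by omega
        have hne : g ⟨i, hiB⟩ ≠ h ⟨i, hiB⟩ := by rw [hga, hhb]; simp
        refine ⟨iff_of_false (by simp) ?_, iff_of_false (by simp) ?_,
          iff_of_false (by simp) ?_,
          iff_of_true (by simp) ⟨⟨⟨i, hiB⟩, Nat.lt_succ_self i, hne⟩, hhg⟩⟩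
        · rintro ⟨hall, _⟩; exact hne (hall ⟨i, hiB⟩ (Nat.lt_succ_self i))
        · rintro ⟨hall, _⟩; exact hne (hall ⟨i, hiB⟩ (Nat.lt_succ_self i))
        · rintro ⟨_, hlt'⟩; omega
      · -- bits tf : new 01, g < h
        have hlt := gray_firstbit (B - i) h0 (suffixStr B i (le_of_lt hiB) h)
          (suffixStr B i (le_of_lt hiB) g) hhb hga
        have hgh : grayVal B g < grayVal B h := by omega
        have hne : g ⟨i, hiB⟩ ≠ h ⟨i, hiB⟩ := by rw [hga, hhb]; simp
        refine ⟨iff_of_false (by simp) ?_, iff_of_false (by simp) ?_,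
          iff_of_true (by simp) ⟨⟨⟨i, hiB⟩, Nat.lt_succ_self i, hne⟩, hgh⟩,
          iff_of_false (by simp) ?_⟩
        · rintro ⟨hall, _⟩; exact hne (hall ⟨i, hiB⟩ (Nat.lt_succ_self i))
        · rintro ⟨hall, _⟩; exact hne (hall ⟨i, hiB⟩ (Nat.lt_succ_self i))
        · rintro ⟨_, hlt'⟩; omega
      · -- bits tt : new 00
        have heqS : ∀ j : Fin B, j.1 < i+1 → g j = h j := by
          intro j hj
          rcases Nat.lt_or_ge j.1 i with hji | hji
          · exact heq j hji
          · have hj' : j = ⟨i, hiB⟩ := Fin.ext (show j.1 = i by omega)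
            rw [hj', hga, hhb]
        refine ⟨iff_of_true (by simp) ⟨heqS, by rw [hcs, if_pos (by simp [hga])]; omega⟩,
          iff_of_false (by simp) ?_,
          iff_of_false (by simp) ?_, iff_of_false (by simp) ?_⟩
        · rintro ⟨_, hp⟩; rw [hcs, if_pos (by simp [hga])] at hp; omega
        · rintro ⟨⟨j, hj, hne⟩, _⟩; exact hne (heqS j hj)
        · rintro ⟨⟨j, hj, hne⟩, _⟩; exact hne (heqS j hj)

/-- Correctness of the Gray-code comparison FSM for stable inputs `g, h ∈ {0,1}^B`
and `i ∈ [0,B]`: state `00` means the length-`i` prefixes are equal with even parity,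
`11` means equal prefixes with odd parity, `01` (resp. `10`) means `⟨g⟩ < ⟨h⟩`
(resp. `⟨g⟩ > ⟨h⟩`) with the difference occurring within the first `i` bits; moreover
in state `00` (resp. `11`) the comparison of `g` and `h` agrees with (resp. is the
reverse of) the comparison of the remaining suffixes as Gray code strings. -/
theorem fsmState_correct (B : ℕ) (g h : Fin B → Bool) (i : ℕ) (hi : i ≤ B) :
    (fsmState B g h i = (false, false) ↔
      (∀ j : Fin B, j.1 < i → g j = h j) ∧
        (Finset.univ.filter fun j : Fin B => j.1 < i ∧ g j = true).card % 2 = 0) ∧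
    (fsmState B g h i = (true, true) ↔
      (∀ j : Fin B, j.1 < i → g j = h j) ∧
        (Finset.univ.filter fun j : Fin B => j.1 < i ∧ g j = true).card % 2 = 1) ∧
    (fsmState B g h i = (false, true) ↔
      (∃ j : Fin B, j.1 < i ∧ g j ≠ h j) ∧ grayVal B g < grayVal B h) ∧
    (fsmState B g h i = (true, false) ↔
      (∃ j : Fin B, j.1 < i ∧ g j ≠ h j) ∧ grayVal B h < grayVal B g) ∧
    (fsmState B g h i = (false, false) →
      (grayVal B g < grayVal B h ↔
        grayVal (B - i) (suffixStr B i hi g) < grayVal (B - i) (suffixStr B i hi h))) ∧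
    (fsmState B g h i = (true, true) →
      (grayVal B g < grayVal B h ↔
        grayVal (B - i) (suffixStr B i hi h) < grayVal (B - i) (suffixStr B i hi g))) := by
  obtain ⟨I1, I2, I3, I4⟩ := aux4 B g h i hi
  refine ⟨I1, I2, I3, I4, ?_, ?_⟩
  · intro hst
    obtain ⟨heq, hpar⟩ := I1.mp hst
    have e := (gray_decomp B g h i hi heq).1 hpar
    omega
  · intro hst
    obtain ⟨heq, hpar⟩ := I2.mp hst
    have e := (gray_decomp B g h i hi heq).2 hpar
    omega
end

section
/- The metastable closure ⋄_M of the Gray-code comparison operator ⋄ is associative on {0,1,M}^2. -/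
/-- A Kleene "bit": `some b` is a stable bit, `none` is metastable `M`. -/
abbrev KBit := Option Bool

/-- Resolutions of a possibly-metastable pair: all binary pairs agreeing with `p`
on the stable components. -/
def resP (p : KBit × KBit) : Set (Bool × Bool) :=
  {q | (∀ b : Bool, p.1 = some b → q.1 = b) ∧ (∀ b : Bool, p.2 = some b → q.2 = b)}

open Classical in
/-- Bitwise superposition of a set of binary pairs: a component is `b` if all elements
agree that it is `b`, and `M` (i.e. `none`) otherwise. -/
noncomputable def supP (S : Set (Bool × Bool)) : KBit × KBit :=
  ((if ∀ s ∈ S, s.1 = true then some true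
    else if ∀ s ∈ S, s.1 = false then some false else none),
   (if ∀ s ∈ S, s.2 = true then some true
    else if ∀ s ∈ S, s.2 = false then some false else none))

/-- The metastable closure of a binary operator `f` on binary pairs:
`f_M(x, y) = * { f(x', y') : x' ∈ res(x), y' ∈ res(y) }`. -/
noncomputable def closure2 (f : Bool × Bool → Bool × Bool → Bool × Bool)
    (x y : KBit × KBit) : KBit × KBit :=
  supP {z | ∃ x' ∈ resP x, ∃ y' ∈ resP y, z = f x' y'}

/-- The metastable closure `⋄_M` of `⋄`. -/
noncomputable def diamondM : KBit × KBit → KBit × KBit → KBit × KBit :=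
  closure2 diamond


-- Auxiliary computable machinery for deciding the associativity by finite case check.
instance resP_dec (p : KBit × KBit) : DecidablePred (· ∈ resP p) := fun q =>
  decidable_of_iff ((∀ b : Bool, p.1 = some b → q.1 = b) ∧ (∀ b : Bool, p.2 = some b → q.2 = b)) Iff.rfl

def supP' (S : Set (Bool × Bool)) [DecidablePred (· ∈ S)] : KBit × KBit :=
  ((if ∀ s ∈ S, s.1 = true then some true
    else if ∀ s ∈ S, s.1 = false then some false else none),
   (if ∀ s ∈ S, s.2 = true then some true
    else if ∀ s ∈ S, s.2 = false then some false else none))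

lemma supP_eq (S : Set (Bool × Bool)) [DecidablePred (· ∈ S)] : supP S = supP' S := by
  unfold supP supP'
  by_cases h1 : ∀ s ∈ S, s.1 = true <;>
  by_cases h2 : ∀ s ∈ S, s.1 = false <;>
  by_cases h3 : ∀ s ∈ S, s.2 = true <;>
  by_cases h4 : ∀ s ∈ S, s.2 = false <;>
  simp [h1, h2, h3, h4]

instance closSet_dec (f : Bool × Bool → Bool × Bool → Bool × Bool) (x y : KBit × KBit) :
    DecidablePred (· ∈ {z | ∃ x' ∈ resP x, ∃ y' ∈ resP y, z = f x' y'}) := fun z =>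
  decidable_of_iff (∃ x' ∈ resP x, ∃ y' ∈ resP y, z = f x' y') Iff.rfl

def closure2' (f : Bool × Bool → Bool × Bool → Bool × Bool) (x y : KBit × KBit) : KBit × KBit :=
  supP' {z | ∃ x' ∈ resP x, ∃ y' ∈ resP y, z = f x' y'}

lemma closure2_eq (f) (x y : KBit × KBit) : closure2 f x y = closure2' f x y :=
  supP_eq _

set_option maxHeartbeats 4000000 in
/-- The metastable closure `⋄_M` of the Gray-code comparison operator `⋄` is
associative on `{0,1,M}^2`. -/
theorem diamondM_assoc (x y z : KBit × KBit) :
    diamondM (diamondM x y) z = diamondM x (diamondM y z) := by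
  simp only [diamondM, closure2_eq]
  revert x y z
  decide
end

section
/- The metastable closure of an associative operator need not be associative: for addition modulo 4 on 2-bit binary strings, (0M +_M 01) +_M 01 = MM but 0M +_M (01 +_M 01) = 1M. -/
/-- The value in `[0,4)` encoded by a 2-bit binary string (first bit most significant). -/
def val2 (p : Bool × Bool) : ℕ := 2 * p.1.toNat + p.2.toNat

/-- The 2-bit binary encoding of a value (taken mod 4). -/
def enc2 (n : ℕ) : Bool × Bool := (decide (n % 4 / 2 = 1), decide (n % 2 = 1))

/-- Addition modulo 4 on 2-bit binary strings. -/
def add4 (p q : Bool × Bool) : Bool × Bool := enc2 (val2 p + val2 q)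

/-- Its metastable closure `+_M`. -/
noncomputable def add4M : KBit × KBit → KBit × KBit → KBit × KBit := closure2 add4

lemma stepA : add4M (some false, none) (some false, some true) = (none, none) := by
  have hset : {z | ∃ x' ∈ resP (some false, none), ∃ y' ∈ resP (some false, some true), z = add4 x' y'}
      = ({(false,true),(true,false)} : Set (Bool × Bool)) := by
    ext z
    simp only [Set.mem_setOf_eq, resP, Set.mem_insert_iff, Set.mem_singleton_iff]
    constructor
    · rintro ⟨⟨a,b⟩, hx, ⟨c,d⟩, hy, rfl⟩; revert hx hy; revert a b c d; decide
    · rintro (rfl | rfl)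
      · exact ⟨(false,false), by decide, (false,true), by decide, by decide⟩
      · exact ⟨(false,true), by decide, (false,true), by decide, by decide⟩
  show supP _ = _
  rw [hset]; simp [supP]

lemma stepB : add4M (none, none) (some false, some true) = (none, none) := by
  have hset : {z | ∃ x' ∈ resP (none, none), ∃ y' ∈ resP (some false, some true), z = add4 x' y'}
      = ({(false,true),(true,false)} ∪ {(true,true),(false,false)} : Set (Bool × Bool)) := by
    ext z
    simp only [Set.mem_setOf_eq, resP, Set.mem_union, Set.mem_insert_iff, Set.mem_singleton_iff]
    constructor
    · rintro ⟨⟨a,b⟩, hx, ⟨c,d⟩, hy, rfl⟩; revert hx hy; revert a b c d; decide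
    · rintro ((rfl | rfl) | (rfl | rfl))
      · exact ⟨(false,false), by decide, (false,true), by decide, by decide⟩
      · exact ⟨(false,true), by decide, (false,true), by decide, by decide⟩
      · exact ⟨(true,false), by decide, (false,true), by decide, by decide⟩
      · exact ⟨(true,true), by decide, (false,true), by decide, by decide⟩
  show supP _ = _
  rw [hset]; simp [supP]

lemma stepC : add4M (some false, some true) (some false, some true) = (some true, some false) := by
  have hset : {z | ∃ x' ∈ resP (some false, some true), ∃ y' ∈ resP (some false, some true), z = add4 x' y'}
      = ({(true,false)} : Set (Bool × Bool)) := by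
    ext z
    simp only [Set.mem_setOf_eq, resP, Set.mem_singleton_iff]
    constructor
    · rintro ⟨⟨a,b⟩, hx, ⟨c,d⟩, hy, rfl⟩; revert hx hy; revert a b c d; decide
    · rintro rfl
      exact ⟨(false,true), by decide, (false,true), by decide, by decide⟩
  show supP _ = _
  rw [hset]; simp [supP]

lemma stepD : add4M (some false, none) (some true, some false) = (some true, none) := by
  have hset : {z | ∃ x' ∈ resP (some false, none), ∃ y' ∈ resP (some true, some false), z = add4 x' y'}
      = ({(true,false),(true,true)} : Set (Bool × Bool)) := by
    ext z
    simp only [Set.mem_setOf_eq, resP, Set.mem_insert_iff, Set.mem_singleton_iff]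
    constructor
    · rintro ⟨⟨a,b⟩, ⟨ha,_⟩, ⟨c,d⟩, ⟨hc,hd⟩, rfl⟩
      have h1 := ha false rfl
      have h2 := hc true rfl
      have h3 := hd false rfl
      simp only at h1 h2 h3
      subst h1; subst h2; subst h3
      cases b <;> simp [add4, val2, enc2]
    · rintro (rfl | rfl)
      · exact ⟨(false,false), by decide, (true,false), by decide, by decide⟩
      · exact ⟨(false,true), by decide, (true,false), by decide, by decide⟩
  show supP _ = _
  rw [hset]; simp [supP]

/-- The metastable closure of an associative operator need not be associative:
for addition modulo 4, `(0M +_M 01) +_M 01 = MM` while `0M +_M (01 +_M 01) = 1M`. -/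
theorem add4M_not_assoc :
    add4M (add4M (some false, none) (some false, some true)) (some false, some true)
      = (none, none) ∧
    add4M (some false, none) (add4M (some false, some true) (some false, some true))
      = (some true, none) := by
  rw [stepA, stepC]
  exact ⟨stepB, stepD⟩
end

section
/- If for valid strings g, h ∈ Valid_B the prefix state s^{(i)}_M = * {⋄-fold of res(g_j h_j) for j ≤ i} equals MM for some i ∈ [1,B], then g = h and s^{(j)}_M = MM for all j ∈ [i,B]. -/
/-- The (stable) Gray codeword `rg_B(x)` viewed as a string over `{0,1,M}`. -/
def stableStr (B : ℕ) (x : ℕ) : Fin B → KBit := fun i => some (rg B x i)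

/-- The superposition `rg_B(x) * rg_B(x+1)` of two consecutive Gray codewords. -/
def superStr (B : ℕ) (x : ℕ) : Fin B → KBit :=
  fun i => if rg B x i = rg B (x + 1) i then some (rg B x i) else none

/-- Valid strings of length `B`: Gray codewords, or superpositions of two
consecutive Gray codewords. -/
def Valid (B : ℕ) : Set (Fin B → KBit) :=
  {g | (∃ x, x < 2 ^ B ∧ g = stableStr B x) ∨ (∃ x, x + 1 < 2 ^ B ∧ g = superStr B x)}

/-- The rank of a valid string in the total order `≺`: `rg_B(x)` has rank `2x` and
`rg_B(x) * rg_B(x+1)` has rank `2x + 1`. -/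
noncomputable def rank (B : ℕ) (g : Fin B → KBit) : ℕ :=
  sInf {n | (∃ x, n = 2 * x ∧ g = stableStr B x) ∨ (∃ x, n = 2 * x + 1 ∧ g = superStr B x)}

/-- The total order `⪯` on valid strings. -/
noncomputable def preceq (B : ℕ) (g h : Fin B → KBit) : Prop := rank B g ≤ rank B h

/-- The resolution of a string over `{0,1,M}`. -/
def res {B : ℕ} (x : Fin B → KBit) : Set (Fin B → Bool) :=
  {y | ∀ i : Fin B, ∀ b : Bool, x i = some b → y i = b}

open Classical in
/-- The superposition of a set of binary strings. -/
noncomputable def supStr {B : ℕ} (S : Set (Fin B → Bool)) : Fin B → KBit :=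
  fun i =>
    if ∀ y ∈ S, y i = true then some true
    else if ∀ y ∈ S, y i = false then some false
    else none

/-- `max^rg` of two stable Gray code strings: the one of larger decoded value. -/
def maxrg (B : ℕ) (g h : Fin B → Bool) : Fin B → Bool :=
  if grayVal B h ≤ grayVal B g then g else h

/-- `min^rg` of two stable Gray code strings: the one of smaller decoded value. -/
def minrg (B : ℕ) (g h : Fin B → Bool) : Fin B → Bool :=
  if grayVal B h ≤ grayVal B g then h else g

/-- The metastable closure `max^rg_M`, taken jointly over all resolutions of the pair. -/
noncomputable def maxrgM (B : ℕ) (g h : Fin B → KBit) : Fin B → KBit :=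
  supStr {z | ∃ g' ∈ res g, ∃ h' ∈ res h, z = maxrg B g' h'}

/-- The metastable closure `min^rg_M`, taken jointly over all resolutions of the pair. -/
noncomputable def minrgM (B : ℕ) (g h : Fin B → KBit) : Fin B → KBit :=
  supStr {z | ∃ g' ∈ res g, ∃ h' ∈ res h, z = minrg B g' h'}

/-- `s^{(i)}_M(g,h)`: the superposition, over all resolutions `g' ∈ res(g)` and
`h' ∈ res(h)`, of the FSM state after processing the first `i` bit pairs. -/
noncomputable def sM (B : ℕ) (g h : Fin B → KBit) (i : ℕ) : KBit × KBit :=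
  supP {s | ∃ g' ∈ res g, ∃ h' ∈ res h, s = fsmState B g' h' i}


/-!
After `i` input pairs from `rg B a` and `rg B b`, the comparison FSM is in the state
`grayCmp (a / d) (b / d)`, `d = 2 ^ (B - i)`, which depends only on the values of the two
prefixes: the parity state `pp` of the common value if they agree, and the absorbing state
recording which one is larger if they differ. A valid string resolves to `{rg x, rg x'}` with
`x' ∈ {x, x + 1}`, so `s^{(i)}_M` superposes at most four such states, and it is `MM` exactly
when two of them are complementary (`11` and `00`, or `10` and `01`). Since the prefix values of
`x, x'` and of `y, y'` differ by at most one, this happens only when both strings are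
`rg x * rg (x + 1)` with `d ∣ x + 1`; a string is the superposition of its resolutions, so
`g = h`. For `j ≥ i` still `2 ^ (B - j) ∣ x + 1`, so the resolution pairs `(x, x)` and
`(x + 1, x + 1)` keep producing the complementary parity states.
-/

lemma testBit_eq_decide_two_pow_le {B x : ℕ} (hx : x < 2 ^ (B + 1)) :
    x.testBit B = decide (2 ^ B ≤ x) := by
  have h₁ : x / 2 ^ B < 2 := Nat.div_lt_of_lt_mul (by rwa [pow_succ] at hx)
  have h₂ : 2 ^ B ≤ x ↔ 1 ≤ x / 2 ^ B := by
    rw [Nat.le_div_iff_mul_le (Nat.two_pow_pos B), one_mul]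
  rw [Nat.testBit_eq_decide_div_mod_eq, decide_eq_decide, h₂]
  generalize x / 2 ^ B = q at h₁ ⊢
  omega

lemma testBit_add_one_eq_xor (x m : ℕ) :
    (x + 1).testBit m = (x.testBit m ^^ decide (2 ^ m ∣ x + 1)) := by
  rw [Nat.testBit_eq_decide_div_mod_eq, Nat.testBit_eq_decide_div_mod_eq]
  by_cases h : 2 ^ m ∣ x + 1
  · rw [Nat.succ_div_of_dvd h, decide_eq_true h]
    simp only [Bool.xor_true, ← decide_not, decide_eq_decide]
    omega
  · rw [Nat.succ_div_of_not_dvd h, decide_eq_false h, Bool.xor_false]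

lemma rg_apply {B x : ℕ} (hx : x < 2 ^ B) (j : Fin B) :
    rg B x j = (x.testBit (B - 1 - j) ^^ x.testBit (B - j)) := by
  induction B generalizing x with
  | zero => exact j.elim0
  | succ B ih =>
    induction j using Fin.cases with
    | zero =>
      simp [rg, testBit_eq_decide_two_pow_le hx, Nat.testBit_lt_two_pow hx]
    | succ j =>
      have hpow : 2 ^ (B + 1) = 2 ^ B + 2 ^ B := by ring
      simp only [rg, Fin.cons_succ, Fin.val_succ]
      split_ifs with hxB
      · rw [ih hxB]
        congr 2 <;> omega
      · rw [ih (by omega), show 2 ^ (B + 1) - 1 - x = 2 ^ (B + 1) - (x + 1) by omega,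
          Nat.testBit_two_pow_sub_succ hx, Nat.testBit_two_pow_sub_succ hx,
          show B + 1 - 1 - (j + 1) = B - 1 - j by omega, show B + 1 - (j + 1) = B - j by omega]
        simp [show B - 1 - j < B + 1 by omega, show B - j < B + 1 by omega]

lemma rg_ne_rg_succ_iff {B x : ℕ} (hx : x + 1 < 2 ^ B) (j : Fin B) :
    rg B x j ≠ rg B (x + 1) j ↔ 2 ^ (B - 1 - j) ∣ x + 1 ∧ ¬ 2 ^ (B - j) ∣ x + 1 := by
  have hdvd : 2 ^ (B - j) ∣ x + 1 → 2 ^ (B - 1 - j) ∣ x + 1 :=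
    (Nat.pow_dvd_pow 2 (by omega)).trans
  rw [rg_apply (by omega), rg_apply hx, testBit_add_one_eq_xor, testBit_add_one_eq_xor]
  by_cases h₁ : 2 ^ (B - 1 - j) ∣ x + 1 <;> by_cases h₂ : 2 ^ (B - j) ∣ x + 1 <;> simp_all

lemma eq_of_rg_ne_rg_succ {B x : ℕ} (hx : x + 1 < 2 ^ B) {j k : Fin B}
    (hj : rg B x j ≠ rg B (x + 1) j) (hk : rg B x k ≠ rg B (x + 1) k) : j = k := by
  rw [rg_ne_rg_succ_iff hx] at hj hk
  have hle : ∀ {j k : Fin B}, 2 ^ (B - 1 - j) ∣ x + 1 → ¬ 2 ^ (B - k) ∣ x + 1 → k ≤ j :=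
    fun hj hk => not_lt.mp fun _ => hk ((Nat.pow_dvd_pow 2 (by omega)).trans hj)
  exact le_antisymm (hle hk.1 hj.2) (hle hj.1 hk.2)

def grayCmp (A C : ℕ) : Bool × Bool :=
  if A = C then (decide (A % 2 = 1), decide (A % 2 = 1)) else (decide (C < A), decide (A < C))

/-- The `i`-th Gray bit of `a` is the xor of the last two bits of the prefix value
`a / 2 ^ (B - (i + 1))`. -/
lemma diamond_grayCmp_div_two (A C : ℕ) :
    diamond (grayCmp (A / 2) (C / 2))
      (decide (A % 2 = 1) ^^ decide (A / 2 % 2 = 1), decide (C % 2 = 1) ^^ decide (C / 2 % 2 = 1)) =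
      grayCmp A C := by
  unfold grayCmp
  by_cases hAC : A / 2 = C / 2
  · have e₁ : A = C ↔ A % 2 = C % 2 := by omega
    have e₂ : C < A ↔ C % 2 < A % 2 := by omega
    have e₃ : A < C ↔ A % 2 < C % 2 := by omega
    rw [if_pos hAC, ← hAC]
    simp only [e₁, e₂, e₃]
    rcases Nat.mod_two_eq_zero_or_one (A / 2) with hp | hp <;>
    rcases Nat.mod_two_eq_zero_or_one A with ha | ha <;>
    rcases Nat.mod_two_eq_zero_or_one C with hc | hc <;>
    simp [hp, ha, hc, diamond]
  · have e₁ : A < C ↔ A / 2 < C / 2 := by omega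
    have e₂ : C < A ↔ C / 2 < A / 2 := by omega
    rw [if_neg hAC, if_neg (by omega)]
    simp only [e₁, e₂]
    rcases Nat.lt_or_gt_of_ne hAC with h | h <;> simp [diamond, h, h.le.not_gt]

lemma fsmState_succ {B : ℕ} (g h : Fin B → Bool) (i : ℕ) :
    fsmState B g h (i + 1) =
      if hi : i < B then diamond (fsmState B g h i) (g ⟨i, hi⟩, h ⟨i, hi⟩)
      else fsmState B g h i := by
  simp only [fsmState, List.range_succ, List.foldl_append, List.foldl_cons, List.foldl_nil]

lemma div_two_pow_sub_eq_div_div {B i : ℕ} (hi : i < B) (n : ℕ) :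
    n / 2 ^ (B - i) = n / 2 ^ (B - (i + 1)) / 2 := by
  rw [Nat.div_div_eq_div_mul, ← pow_succ, show B - (i + 1) + 1 = B - i by omega]

lemma fsmState_rg {B a b : ℕ} (ha : a < 2 ^ B) (hb : b < 2 ^ B) (i : ℕ) :
    fsmState B (rg B a) (rg B b) i = grayCmp (a / 2 ^ (B - i)) (b / 2 ^ (B - i)) := by
  induction i with
  | zero => simp [fsmState, grayCmp, Nat.div_eq_of_lt ha, Nat.div_eq_of_lt hb]
  | succ i ih =>
    rw [fsmState_succ, ih]
    split_ifs with hi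
    · have hbits : ∀ n, (n.testBit (B - 1 - i) ^^ n.testBit (B - i)) =
          (decide (n / 2 ^ (B - (i + 1)) % 2 = 1) ^^
            decide (n / 2 ^ (B - (i + 1)) / 2 % 2 = 1)) := by
        intro n
        rw [Nat.testBit_eq_decide_div_mod_eq, Nat.testBit_eq_decide_div_mod_eq,
          div_two_pow_sub_eq_div_div hi, Nat.sub_sub, Nat.add_comm 1 i]
      simp only [rg_apply ha, rg_apply hb, hbits, div_two_pow_sub_eq_div_div hi]
      exact diamond_grayCmp_div_two _ _
    · rw [show B - (i + 1) = B - i by omega]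

lemma supStr_res {B : ℕ} (x : Fin B → KBit) : supStr (res x) = x := by
  have hmem : ∀ b, (fun j => (x j).getD b) ∈ res x := fun b j c hc => by simp [hc]
  funext i
  unfold supStr
  cases hxi : x i with
  | none =>
    rw [if_neg fun h => by simpa [hxi] using h _ (hmem false),
      if_neg fun h => by simpa [hxi] using h _ (hmem true)]
  | some b =>
    have hb : ∀ y ∈ res x, y i = b := fun y hy => hy i b hxi
    cases b
    · rw [if_neg fun h => by simpa [hxi] using h _ (hmem false), if_pos hb]
    · rw [if_pos hb]

lemma res_injective {B : ℕ} : Function.Injective (res : (Fin B → KBit) → Set (Fin B → Bool)) :=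
  Function.LeftInverse.injective supStr_res

lemma res_stableStr (B x : ℕ) : res (stableStr B x) = {rg B x} := by
  ext y
  simp [res, stableStr, funext_iff, eq_comm]

lemma res_superStr {B x : ℕ} (hx : x + 1 < 2 ^ B) :
    res (superStr B x) = {rg B x, rg B (x + 1)} := by
  ext y
  simp only [Set.mem_insert_iff, Set.mem_singleton_iff]
  constructor
  · intro hy
    have hagree : ∀ j, rg B x j = rg B (x + 1) j → y j = rg B x j :=
      fun j hj => hy j _ (by simp [superStr, hj])
    refine or_iff_not_imp_left.mpr fun hyx => ?_
    obtain ⟨k, hk⟩ := Function.ne_iff.mp hyx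
    have hk' : rg B x k ≠ rg B (x + 1) k := fun h => hk (hagree k h)
    funext j
    by_cases hj : rg B x j = rg B (x + 1) j
    · rw [hagree j hj, hj]
    · obtain rfl := eq_of_rg_ne_rg_succ hx hj hk'
      revert hk hj
      cases y j <;> cases rg B x j <;> cases rg B (x + 1) j <;> simp
  · rintro (rfl | rfl) j b hb <;>
      simp only [superStr] at hb <;> split_ifs at hb with h <;> simp_all

lemma exists_res_eq_pair_of_mem_Valid {B : ℕ} {g : Fin B → KBit} (hg : g ∈ Valid B) :
    ∃ x x', (x' = x ∨ x' = x + 1) ∧ x' < 2 ^ B ∧ res g = {rg B x, rg B x'} := by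
  rcases hg with ⟨x, hx, rfl⟩ | ⟨x, hx, rfl⟩
  · exact ⟨x, x, Or.inl rfl, hx, by rw [res_stableStr, Set.pair_eq_singleton]⟩
  · exact ⟨x, x + 1, Or.inr rfl, hx, res_superStr hx⟩

lemma supP_eq_none_none_iff {S : Set (Bool × Bool)} :
    supP S = (none, none) ↔ ∃ s ∈ S, ∃ t ∈ S, s.1 ≠ t.1 ∧ s.2 ≠ t.2 := by
  simp only [supP, Prod.mk.injEq]
  split_ifs <;> grind

lemma supP_grayCmp_eq_none_none_iff {X X' Y Y' : ℕ} (hX : X' = X ∨ X' = X + 1)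
    (hY : Y' = Y ∨ Y' = Y + 1) :
    supP {s | ∃ A ∈ ({X, X'} : Set ℕ), ∃ C ∈ ({Y, Y'} : Set ℕ), s = grayCmp A C} = (none, none) ↔
      X = Y ∧ X' = X + 1 ∧ Y' = X + 1 := by
  rw [supP_eq_none_none_iff]
  constructor
  · rintro ⟨_, ⟨A, hA, C, hC, rfl⟩, _, ⟨A', hA', C', hC', rfl⟩, h₁, h₂⟩
    simp only [Set.mem_insert_iff, Set.mem_singleton_iff] at hA hC hA' hC'
    unfold grayCmp at h₁ h₂
    split_ifs at h₁ h₂ <;> simp only [ne_eq, decide_eq_decide] at h₁ h₂ <;> omega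
  · rintro ⟨rfl, rfl, rfl⟩
    refine ⟨_, ⟨X, by simp, X, by simp, rfl⟩, _, ⟨X + 1, by simp, X + 1, by simp, rfl⟩, ?_⟩
    simp only [grayCmp, if_true, ne_eq, decide_eq_decide]
    omega

lemma sM_eq_supP_grayCmp {B : ℕ} {g h : Fin B → KBit} {x x' y y' : ℕ} (hx : x < 2 ^ B)
    (hx' : x' < 2 ^ B) (hy : y < 2 ^ B) (hy' : y' < 2 ^ B) (hg : res g = {rg B x, rg B x'})
    (hh : res h = {rg B y, rg B y'}) (i : ℕ) :
    sM B g h i = supP {s | ∃ A ∈ ({x / 2 ^ (B - i), x' / 2 ^ (B - i)} : Set ℕ),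
      ∃ C ∈ ({y / 2 ^ (B - i), y' / 2 ^ (B - i)} : Set ℕ), s = grayCmp A C} := by
  unfold sM
  congr 1
  ext s
  simp [hg, hh, fsmState_rg hx hy, fsmState_rg hx hy', fsmState_rg hx' hy, fsmState_rg hx' hy']

lemma div_eq_or_of_eq_or {x x' : ℕ} (h : x' = x ∨ x' = x + 1) (d : ℕ) :
    x' / d = x / d ∨ x' / d = x / d + 1 := by
  rcases h with rfl | rfl
  · exact Or.inl rfl
  · rw [Nat.succ_div]
    split_ifs <;> simp

lemma eq_succ_and_dvd_of_div_eq_succ {x x' d : ℕ} (h : x' = x ∨ x' = x + 1)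
    (hd : x' / d = x / d + 1) : x' = x + 1 ∧ d ∣ x + 1 := by
  rcases h with rfl | rfl
  · omega
  · exact ⟨rfl, by_contra fun hnd => by rw [Nat.succ_div_of_not_dvd hnd] at hd; omega⟩

theorem sM_MM_general (B : ℕ) (g h : Fin B → KBit) (hg : g ∈ Valid B) (hh : h ∈ Valid B)
    (i : ℕ) (hMM : sM B g h i = (none, none)) :
    g = h ∧ ∀ j, i ≤ j → j ≤ B → sM B g h j = (none, none) := by
  obtain ⟨x, x', hx, hx'B, hgx⟩ := exists_res_eq_pair_of_mem_Valid hg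
  obtain ⟨y, y', hy, hy'B, hhy⟩ := exists_res_eq_pair_of_mem_Valid hh
  have hsM : ∀ j, sM B g h j = (none, none) ↔ x / 2 ^ (B - j) = y / 2 ^ (B - j) ∧
      x' / 2 ^ (B - j) = x / 2 ^ (B - j) + 1 ∧ y' / 2 ^ (B - j) = x / 2 ^ (B - j) + 1 := fun j => by
    rw [sM_eq_supP_grayCmp (by omega) hx'B (by omega) hy'B hgx hhy,
      supP_grayCmp_eq_none_none_iff (div_eq_or_of_eq_or hx _) (div_eq_or_of_eq_or hy _)]
  obtain ⟨hxy, hx', hy'⟩ := (hsM i).mp hMM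
  obtain ⟨rfl, hdx⟩ := eq_succ_and_dvd_of_div_eq_succ hx hx'
  obtain ⟨rfl, hdy⟩ := eq_succ_and_dvd_of_div_eq_succ hy (hxy ▸ hy')
  obtain rfl : x = y := Nat.succ_injective ((Nat.div_left_inj hdx hdy).mp (hx'.trans hy'.symm))
  refine ⟨res_injective (hgx.trans hhy.symm), fun j hij _ => (hsM j).mpr ?_⟩
  have hdj : 2 ^ (B - j) ∣ x + 1 := (Nat.pow_dvd_pow 2 (by omega)).trans hdx
  exact ⟨rfl, Nat.succ_div_of_dvd hdj, Nat.succ_div_of_dvd hdj⟩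

/-- If for valid strings `g, h` the metastable prefix state `s^{(i)}_M` equals `MM`
for some `i ∈ [1,B]`, then `g = h` and `s^{(j)}_M = MM` for all `j ∈ [i,B]`. -/
theorem sM_MM (B : ℕ) (g h : Fin B → KBit) (hg : g ∈ Valid B) (hh : h ∈ Valid B)
    (i : ℕ) (hi1 : 1 ≤ i) (hiB : i ≤ B) (hMM : sM B g h i = (none, none)) :
    g = h ∧ ∀ j, i ≤ j → j ≤ B → sM B g h j = (none, none) :=
  sM_MM_general B g h hg hh i hMM
end

section
/- Correctness of the Ladner–Fischer left recursion pattern: given an associative operator ⊕ and a circuit computing all prefix-⊕ of the ⌈B/2⌉ combined inputs d_{2j-1} ⊕ d_{2j} (plus d_B if B odd), the construction that outputs π'_{i/2} for even i and π'_{(i-1)/2} ⊕ d_i for odd i (with π_1 = d_1) computes all B prefixes π_i = d_1 ⊕ ... ⊕ d_i. -/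
/-- The `⊕`-prefix `π_i = d_1 ⊕ d_2 ⊕ … ⊕ d_i` of a (1-indexed) sequence `d`,
evaluated left to right. -/
def pre {D : Type*} (op : D → D → D) (d : ℕ → D) : ℕ → D
  | 0 => d 0
  | 1 => d 1
  | (n + 2) => op (pre op d (n + 1)) (d (n + 2))

lemma pre_succ {D : Type*} (op : D → D → D) (d : ℕ → D) (m : ℕ) (hm : 1 ≤ m) :
    pre op d (m + 1) = op (pre op d m) (d (m + 1)) := by
  obtain ⟨n, rfl⟩ : ∃ n, m = n + 1 := ⟨m - 1, by omega⟩
  rfl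

/-- Correctness of the Ladner–Fischer left recursion pattern: let `⊕` be associative
and let `d'` be the combined sequence `d'_j = d_{2j-1} ⊕ d_{2j}` (for `2j ≤ B`), plus
`d'_{(B+1)/2} = d_B` if `B` is odd. Denoting by `π'_j` the `j`-th `⊕`-prefix of `d'`,
the construction outputting `π'_{i/2}` for even `i`, `d_1` for `i = 1`, and
`π'_{(i-1)/2} ⊕ d_i` for odd `i > 1` computes all `B` prefixes
`π_i = d_1 ⊕ … ⊕ d_i`. -/
theorem ladner_fischer_left_pattern {D : Type*} (op : D → D → D)
    (hassoc : ∀ a b c : D, op (op a b) c = op a (op b c))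
    (B : ℕ) (d d' : ℕ → D)
    (hd'even : ∀ j, 1 ≤ j → 2 * j ≤ B → d' j = op (d (2 * j - 1)) (d (2 * j)))
    (hd'odd : B % 2 = 1 → d' ((B + 1) / 2) = d B) :
    ∀ i, 1 ≤ i → i ≤ B →
      pre op d i =
        (if i = 1 then d 1
         else if i % 2 = 0 then pre op d' (i / 2)
         else op (pre op d' ((i - 1) / 2)) (d i)) := by
  have key : ∀ k, 1 ≤ k → 2 * k ≤ B → pre op d (2 * k) = pre op d' k := by
    intro k hk
    induction k with
    | zero => omega
    | succ n ih =>
      intro hB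
      rcases Nat.eq_zero_or_pos n with rfl | hn
      · show pre op d 2 = pre op d' 1
        have h := hd'even 1 le_rfl (by omega)
        simp only [show (2:ℕ) * 1 - 1 = 1 by norm_num, show (2:ℕ) * 1 = 2 by norm_num] at h
        show op (pre op d 1) (d 2) = d' 1
        rw [h]; rfl
      · have h2n : 2 * (n + 1) = (2 * n + 1) + 1 := by ring
        rw [h2n, pre_succ op d _ (by omega),
            pre_succ op d (2 * n) (by omega), hassoc,
            ih hn (by omega)]
        have h := hd'even (n + 1) (by omega) hB
        have h1 : 2 * (n + 1) - 1 = 2 * n + 1 := by omega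
        have h2 : 2 * (n + 1) = 2 * n + 1 + 1 := by omega
        rw [h1, h2] at h
        rw [← h, pre_succ op d' n hn]
  intro i hi hB
  split_ifs with h1 h2
  · subst h1; rfl
  · obtain ⟨k, rfl⟩ : ∃ k, i = 2 * k := ⟨i / 2, by omega⟩
    rw [key k (by omega) hB]
    congr 1
    omega
  · obtain ⟨k, rfl⟩ : ∃ k, i = 2 * k + 1 := ⟨i / 2, by omega⟩
    have hk : 1 ≤ k := by omega
    rw [pre_succ op d (2 * k) (by omega), key k hk (by omega)]
    congr 2
    omega
end
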